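/- arXiv:2511.13287 — 5 statements merged into one kernel-verified Lean document; each statement's English description precedes it below -/
import Mathlib

section
/- Fix k ≥ 2 and a complex number z (or a formal variable). Define a sequence (w_m)_{m≥1} by the recursion w_m = -z^k - Σ_{r=1}^{m-1} Σ_{s=1}^{k-1} C(m-r-1, s-1) z^s w_r. Then for all m ≥ 1, w_m = -z^k · Σ_{r=0}^{m-1} ψ_{k,r} · C(m-1, r) · z^r. -/
/-!
Write `w (n + 1) = -z ^ k * Q n` with `Q n = ∑ j ≤ n, ψ_{k,j} C(n, j) z ^ j`. By strong induction
the recursion reduces to `∑ t < n, ∑ s ∈ [1, k - 1], C(n - 1 - t, s - 1) z ^ s Q t = 1 - Q n`.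
Expanding `Q t` and summing over `t` with the convolution
`∑ t < n, C(t, j) C(n - 1 - t, s - 1) = C(n, j + s)`, the coefficient of `C(n, i) z ^ i` on the
left becomes the window sum of `ψ_{k, i - s}` over `1 ≤ s ≤ min (k - 1) i`. The partial sums of
`ψ_k` are the indicator of `n ≡ 1 (mod k)`, so this window sum is `[i = 0] - ψ_{k,i}`.
-/

open Finset

/-- `ψ_{k,r}`: 1 if `r ≡ 0 (mod k)`, -1 if `r ≡ 1 (mod k)`, 0 otherwise. -/
noncomputable def psi (k : ℕ) (r : ℤ) : ℂ :=
  if r % (k : ℤ) = 0 then 1 else if r % (k : ℤ) = 1 then -1 else 0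

theorem Nat.sum_range_choose_eq_choose_succ (n j : ℕ) :
    ∑ t ∈ range n, t.choose j = n.choose (j + 1) := by
  induction n with
  | zero => simp
  | succ n ih => rw [sum_range_succ, ih, Nat.choose_succ_succ', add_comm]

theorem Nat.sum_range_choose_mul_choose_sub (n i j : ℕ) :
    ∑ t ∈ range n, t.choose j * (n - 1 - t).choose i = n.choose (i + j + 1) := by
  induction n generalizing i with
  | zero => simp
  | succ n ih =>
    cases i with
    | zero => simpa [add_comm] using Nat.sum_range_choose_eq_choose_succ (n + 1) j
    | succ i =>
      have pascal : ∀ t ∈ range n, t.choose j * (n - t).choose (i + 1) =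
          t.choose j * (n - 1 - t).choose i + t.choose j * (n - 1 - t).choose (i + 1) := by
        intro t ht
        rw [show n - t = n - 1 - t + 1 by simp at ht; omega, Nat.choose_succ_succ', mul_add]
      rw [sum_range_succ, Nat.add_sub_cancel, Nat.sub_self, Nat.choose_zero_succ, mul_zero,
        add_zero, sum_congr rfl pascal, sum_add_distrib, ih, ih, Nat.choose_succ_succ' n,
        add_right_comm i 1 j]

theorem Finset.sum_range_mul_shift {R : Type*} [NonUnitalNonAssocSemiring R] (f g : ℕ → R)
    (s N : ℕ) (hg : ∀ i, N ≤ i → g i = 0) :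
    ∑ j ∈ range N, f j * g (j + s) = ∑ i ∈ range N, (if s ≤ i then f (i - s) else 0) * g i := by
  have hfilter : (range N).filter (s ≤ ·) = Ico s N := by ext; simp; omega
  calc ∑ j ∈ range N, f j * g (j + s) = ∑ j ∈ range (N - s), f j * g (j + s) :=
        (sum_subset (range_subset_range.2 (N.sub_le s))
          fun j _ hj => by rw [hg _ (by simp at hj; omega), mul_zero]).symm
    _ = ∑ i ∈ range N, (if s ≤ i then f (i - s) else 0) * g i := by
        simp only [ite_mul, zero_mul]
        rw [← sum_filter, hfilter, sum_Ico_eq_sum_range]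
        simp [add_comm]

theorem Finset.sum_Icc_ite_sub {M : Type*} [AddCommMonoid M] (f : ℕ → M) (k n : ℕ) :
    ∑ s ∈ Icc 1 (k - 1), (if s ≤ n then f (n - s) else 0) = ∑ j ∈ Ico (n + 1 - k) n, f j := by
  rw [← sum_filter]
  apply sum_nbij' (n - ·) (n - ·) <;> intro a ha <;> simp at ha ⊢ <;> omega

section Psi

variable {k : ℕ}

theorem psi_natCast (hk : 1 < k) (n : ℕ) :
    psi k n = if (n : ZMod k) = 0 then 1 else if (n : ZMod k) = 1 then -1 else 0 := by
  have h0 : (n : ZMod k) = 0 ↔ n % k = 0 := by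
    rw [ZMod.natCast_eq_zero_iff, Nat.dvd_iff_mod_eq_zero]
  have h1 : (n : ZMod k) = 1 ↔ n % k = 1 := by
    rw [← Nat.cast_one, ZMod.natCast_eq_natCast_iff', Nat.mod_eq_of_lt hk]
  simp only [psi, h0, h1]
  norm_cast

theorem sum_range_psi (hk : 1 < k) (n : ℕ) :
    ∑ j ∈ range n, psi k j = if (n : ZMod k) = 1 then 1 else 0 := by
  have : Nontrivial (ZMod k) := ZMod.nontrivial_iff.2 hk.ne'
  induction n with
  | zero => simp
  | succ n ih =>
    rw [sum_range_succ, ih, psi_natCast hk n]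
    simp only [Nat.cast_succ, add_eq_right]
    split_ifs <;> simp_all

theorem sum_Ico_psi (hk : 1 < k) (n : ℕ) :
    ∑ j ∈ Ico (n + 1 - k) n, psi k j = (if n = 0 then 1 else 0) - psi k n := by
  rw [sum_Ico_eq_sub _ (by omega), sum_range_psi hk, sum_range_psi hk, psi_natCast hk]
  have : Nontrivial (ZMod k) := ZMod.nontrivial_iff.2 hk.ne'
  rcases le_or_gt k (n + 1) with hkn | hnk
  · simp only [Nat.cast_sub hkn, ZMod.natCast_self, sub_zero, Nat.cast_succ, add_eq_right,
      if_neg (show n ≠ 0 by omega)]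
    split_ifs <;> simp_all
  · have hn : (n : ZMod k) = 0 ↔ n = 0 := by
      rw [ZMod.natCast_eq_zero_iff]
      exact ⟨fun h => Nat.eq_zero_of_dvd_of_lt h (by omega), fun h => h ▸ dvd_zero k⟩
    rw [Nat.sub_eq_zero_of_le hnk.le]
    simp only [hn, Nat.cast_zero]
    split_ifs <;> simp_all

end Psi

noncomputable def psiChooseSum (k : ℕ) (z : ℂ) (n : ℕ) : ℂ :=
  ∑ j ∈ range (n + 1), psi k j * (n.choose j : ℂ) * z ^ j

theorem psiChooseSum_eq_sum_range (k : ℕ) (z : ℂ) {n N : ℕ} (hn : n < N) :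
    psiChooseSum k z n = ∑ j ∈ range N, psi k j * (n.choose j : ℂ) * z ^ j :=
  sum_subset (range_subset_range.2 hn) fun j _ hj => by
    rw [Nat.choose_eq_zero_of_lt (by simpa using hj), Nat.cast_zero, mul_zero, zero_mul]

theorem sum_sum_choose_mul_psiChooseSum {k : ℕ} (hk : 1 < k) (z : ℂ) (n : ℕ) :
    ∑ t ∈ range n, ∑ s ∈ Icc 1 (k - 1),
        ((n - 1 - t).choose (s - 1) : ℂ) * z ^ s * psiChooseSum k z t =
      1 - psiChooseSum k z n := by
  set g : ℕ → ℂ := fun i => (n.choose i : ℂ) * z ^ i with hg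
  calc _ = ∑ t ∈ range n, ∑ s ∈ Icc 1 (k - 1), ∑ j ∈ range (n + 1),
        ((t.choose j * (n - 1 - t).choose (s - 1) : ℕ) : ℂ) * (psi k j * z ^ (j + s)) := by
        refine sum_congr rfl fun t ht => sum_congr rfl fun s _ => ?_
        rw [psiChooseSum_eq_sum_range k z (N := n + 1) (by simp at ht; omega), mul_sum]
        refine sum_congr rfl fun j _ => ?_
        push_cast; ring
    _ = ∑ s ∈ Icc 1 (k - 1), ∑ j ∈ range (n + 1), psi k j * g (j + s) := by
        rw [sum_comm]
        refine sum_congr rfl fun s hs => ?_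
        rw [sum_comm]
        refine sum_congr rfl fun j _ => ?_
        rw [← sum_mul, ← Nat.cast_sum, Nat.sum_range_choose_mul_choose_sub,
          show s - 1 + j + 1 = j + s by simp at hs; omega, hg]
        ring
    _ = ∑ i ∈ range (n + 1),
          (∑ s ∈ Icc 1 (k - 1), if s ≤ i then psi k (i - s : ℕ) else 0) * g i := by
        simp_rw [sum_mul]
        rw [eq_comm, sum_comm]
        refine sum_congr rfl fun s _ => (sum_range_mul_shift (fun j => psi k j) g s (n + 1)
          fun i hi => ?_).symm
        simp [hg, Nat.choose_eq_zero_of_lt (show n < i by omega)]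
    _ = ∑ i ∈ range (n + 1), ((if i = 0 then 1 else 0) - psi k i) * g i := by
        refine sum_congr rfl fun i _ => ?_
        rw [sum_Icc_ite_sub (fun j => psi k j), sum_Ico_psi hk]
    _ = 1 - psiChooseSum k z n := by
        simp [psiChooseSum, hg, sub_mul, sum_sub_distrib, mul_assoc]

/-- The Goulden–Jackson weights for streaks of length `k` satisfy the closed formula. -/
theorem streak_weights_formula (k : ℕ) (hk : 2 ≤ k) (z : ℂ) (w : ℕ → ℂ)
    (hw : ∀ m, 1 ≤ m →
      w m = -z ^ k - ∑ r ∈ Finset.Icc 1 (m - 1), ∑ s ∈ Finset.Icc 1 (k - 1),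
        ((m - r - 1).choose (s - 1) : ℂ) * z ^ s * w r) :
    ∀ m, 1 ≤ m →
      w m = -z ^ k * ∑ r ∈ Finset.range m, psi k r * ((m - 1).choose r : ℂ) * z ^ r := by
  suffices h : ∀ n, w (n + 1) = -z ^ k * psiChooseSum k z n by
    intro m hm
    obtain ⟨n, rfl⟩ := Nat.exists_eq_add_of_le' hm
    exact h n
  intro n
  induction n using Nat.strong_induction_on with
  | _ n ih =>
    have hsum : ∑ r ∈ Icc 1 n, ∑ s ∈ Icc 1 (k - 1),
          ((n + 1 - r - 1).choose (s - 1) : ℂ) * z ^ s * w r =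
        -z ^ k * (1 - psiChooseSum k z n) := by
      rw [← sum_sum_choose_mul_psiChooseSum hk z, mul_sum, ← Ico_add_one_right_eq_Icc,
        sum_Ico_eq_sum_range, Nat.add_sub_cancel]
      refine sum_congr rfl fun t ht => ?_
      rw [mul_sum]
      refine sum_congr rfl fun s _ => ?_
      rw [add_comm 1 t, ih t (by simpa using ht), show n + 1 - (t + 1) - 1 = n - 1 - t by omega]
      ring
    rw [hw (n + 1) (by omega), Nat.add_sub_cancel, hsum]
    ring
end

section
/- Fix k ≥ 2, n ≥ k. Let w_s = -z^k Σ_{r=0}^{s-1} ψ_{k,r} C(s-1,r) z^r. Then Σ_{s=1}^{n-k+1} C(n-s, k-1) · w_s = -Σ_{r=k}^{n} ψ_{k,r} · C(n,r) · z^r. -/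
/-!
Expanding each `w_s` and exchanging the two sums, the coefficient of `-ψ_{k,r} z^(r+k)` is
`∑_s C(n-s, k-1) C(s-1, r)`, which is `C(n, r+k)` by the upper-index Vandermonde identity
`∑_{i+j=m} C(i,a) C(j,b) = C(m+1, a+b+1)`. Since `ψ_{k,r+k} = ψ_{k,r}`, shifting `r` by `k`
gives the right-hand side.
-/

open Finset

theorem Nat.sum_antidiagonal_choose_mul_choose (a b m : ℕ) :
    ∑ ij ∈ antidiagonal m, ij.1.choose a * ij.2.choose b = (m + 1).choose (a + b + 1) := by
  induction m generalizing a with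
  | zero => rcases a with _ | a <;> rcases b with _ | b <;> simp <;>
    rw [Nat.choose_eq_zero_of_lt (by omega)]
  | succ m ih =>
    rw [Nat.sum_antidiagonal_succ]
    rcases a with _ | a
    · have h0 := ih 0
      simp only [Nat.choose_zero_right, one_mul, zero_add] at h0 ⊢
      rw [h0, ← Nat.choose_succ_succ']
    · simp_rw [Nat.choose_zero_succ, zero_mul, zero_add, Nat.choose_succ_succ' _ a, add_mul,
        sum_add_distrib, ih]
      rw [show a + 1 + b + 1 = a + b + 1 + 1 by ring, ← Nat.choose_succ_succ']

theorem Nat.sum_Icc_choose_sub_mul_choose_sub_one {n k : ℕ} (hk : 1 ≤ k) (hkn : k ≤ n) (r : ℕ) :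
    ∑ s ∈ Icc 1 (n - k + 1), (n - s).choose (k - 1) * (s - 1).choose r = n.choose (r + k) := by
  obtain ⟨m, rfl⟩ : ∃ m, n = m + 1 := ⟨n - 1, by omega⟩
  have hvanish : ∀ s ∈ Icc 1 (m + 1), s ∉ Icc 1 (m + 1 - k + 1) →
      (m + 1 - s).choose (k - 1) * (s - 1).choose r = 0 := by
    intro s hs hs'
    rw [mem_Icc] at hs hs'
    rw [Nat.choose_eq_zero_of_lt (by omega), zero_mul]
  rw [sum_subset (Icc_subset_Icc_right (by omega)) hvanish, ← Ico_add_one_right_eq_Icc,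
    sum_Ico_eq_sum_range, show r + k = r + (k - 1) + 1 by omega,
    ← Nat.sum_antidiagonal_choose_mul_choose, Nat.sum_antidiagonal_eq_sum_range_succ_mk,
    Nat.add_sub_cancel]
  refine sum_congr rfl fun i _ => ?_
  rw [mul_comm]
  congr 2 <;> omega

theorem psi_add_self (k : ℕ) (r : ℤ) : psi k (r + k) = psi k r := by
  simp only [psi, Int.add_emod_right]

/-- Total Goulden–Jackson weight of the set of all streaks of length `k` over `{1,…,n}`. -/
theorem streak_total_weight (n k : ℕ) (hk : 2 ≤ k) (hn : k ≤ n) (z : ℂ) :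
    ∑ s ∈ Finset.Icc 1 (n - k + 1),
        ((n - s).choose (k - 1) : ℂ) *
          (-z ^ k * ∑ r ∈ Finset.range s, psi k r * ((s - 1).choose r : ℂ) * z ^ r) =
      -∑ r ∈ Finset.Icc k n, psi k r * (n.choose r : ℂ) * z ^ r := by
  have hextend : ∀ s ∈ Icc 1 (n - k + 1),
      ((n - s).choose (k - 1) : ℂ) *
          (-z ^ k * ∑ r ∈ range s, psi k r * ((s - 1).choose r : ℂ) * z ^ r) =
        ∑ r ∈ range (n - k + 1),
          -(psi k r * z ^ (r + k)) * ((n - s).choose (k - 1) * (s - 1).choose r : ℕ) := by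
    intro s hs
    rw [mem_Icc] at hs
    rw [mul_sum, mul_sum, ← sum_subset (range_subset_range.2 hs.2)]
    · exact sum_congr rfl fun r _ => by push_cast; ring
    · intro r _ hr
      rw [mem_range, not_lt] at hr
      rw [Nat.choose_eq_zero_of_lt (n := s - 1) (by omega), mul_zero, Nat.cast_zero, mul_zero]
  calc _ = ∑ r ∈ range (n - k + 1), -(psi k r * z ^ (r + k)) * (n.choose (r + k) : ℂ) := by
        simp_rw [sum_congr rfl hextend, sum_comm (s := Icc 1 _), ← mul_sum, ← Nat.cast_sum,
          Nat.sum_Icc_choose_sub_mul_choose_sub_one (by omega) hn]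
    _ = _ := by
        rw [← Ico_add_one_right_eq_Icc, sum_Ico_eq_sum_range, ← sum_neg_distrib,
          show n + 1 - k = n - k + 1 by omega]
        refine sum_congr rfl fun r _ => ?_
        rw [add_comm k r, Nat.cast_add, psi_add_self]
        ring
end

section
/- For n ∈ ℕ and k ≥ 2, the two expressions for the generating function agree: 1 / (Σ_{r=0}^{n} ψ_{k,r} C(n,r) z^r) = k / (Σ_{s=1}^{k-1} (1 - ω_k^{-s})(1 + ω_k^s z)^n), for all complex z where the denominators are nonzero. -/
/-!
Expanding `(1 + ω^s z)^n` binomially and summing over all `s` modulo `k`, the coefficient of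
`C(n,r) z^r` is `∑_s (ω^{sr} - ω^{s(r-1)})`, which by orthogonality of the `k`-th roots of unity
is `k ψ_{k,r}`. The term `s = 0` vanishes, so the second denominator is `k` times the first.
-/

open Finset

/-- `ω_k = exp(2πi/k)`. -/
noncomputable def omega (k : ℕ) : ℂ := Complex.exp (2 * Real.pi * Complex.I / k)

namespace IsPrimitiveRoot

variable {K : Type*} [Field K] {ζ : K} {k : ℕ}

theorem sum_range_zpow_pow (hζ : IsPrimitiveRoot ζ k) (m : ℤ) :
    ∑ s ∈ range k, (ζ ^ m) ^ s = if (k : ℤ) ∣ m then (k : K) else 0 := by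
  split_ifs with hdvd
  · simp [(hζ.zpow_eq_one_iff_dvd m).mpr hdvd]
  · have hpow : (ζ ^ m) ^ k = 1 := by
      rw [← zpow_natCast, ← zpow_mul, mul_comm, zpow_mul, hζ.zpow_eq_one, one_zpow]
    rw [geom_sum_eq (mt (hζ.zpow_eq_one_iff_dvd m).mp hdvd), hpow, sub_self, zero_div]

end IsPrimitiveRoot

lemma Int.dvd_sub_one_iff_emod_eq_one {k : ℤ} (hk : 1 < k) (r : ℤ) :
    k ∣ r - 1 ↔ r % k = 1 := by
  rw [Int.dvd_iff_emod_eq_zero, ← Int.emod_eq_emod_iff_emod_sub_eq_zero,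
    Int.emod_eq_of_lt zero_le_one hk]

lemma sum_range_one_sub_zpow_neg_mul_pow_pow {ζ : ℂ} {k : ℕ} (hζ : IsPrimitiveRoot ζ k)
    (hk : 2 ≤ k) (r : ℕ) :
    ∑ s ∈ range k, (1 - ζ ^ (-(s : ℤ))) * (ζ ^ s) ^ r = k * psi k r := by
  have hζ0 : ζ ≠ 0 := hζ.ne_zero (by omega)
  have hterm : ∀ s : ℕ, (1 - ζ ^ (-(s : ℤ))) * (ζ ^ s) ^ r
      = (ζ ^ (r : ℤ)) ^ s - (ζ ^ ((r : ℤ) - 1)) ^ s := by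
    intro s
    simp only [← zpow_natCast, ← zpow_mul, sub_mul, one_mul, ← zpow_add₀ hζ0]
    ring_nf
  have hexcl : ¬ ((k : ℤ) ∣ r ∧ (k : ℤ) ∣ r - 1) := fun ⟨h0, h1⟩ => by
    have := Int.le_of_dvd one_pos (by simpa using dvd_sub h0 h1)
    omega
  simp only [hterm, sum_sub_distrib, hζ.sum_range_zpow_pow, psi, ← Int.dvd_iff_emod_eq_zero,
    ← Int.dvd_sub_one_iff_emod_eq_one (by omega : 1 < (k : ℤ))]
  split_ifs <;> simp_all

lemma sum_range_one_sub_zpow_neg_mul_one_add_pow {ζ : ℂ} {k : ℕ} (hζ : IsPrimitiveRoot ζ k)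
    (hk : 2 ≤ k) (n : ℕ) (z : ℂ) :
    ∑ s ∈ range k, (1 - ζ ^ (-(s : ℤ))) * (1 + ζ ^ s * z) ^ n
      = k * ∑ r ∈ range (n + 1), psi k r * (n.choose r : ℂ) * z ^ r := by
  simp only [add_comm (1 : ℂ), add_pow, one_pow, mul_one, mul_sum, mul_pow]
  rw [sum_comm]
  refine sum_congr rfl fun r _ => ?_
  rw [show (k : ℂ) * (psi k r * (n.choose r : ℂ) * z ^ r)
      = k * psi k r * ((n.choose r : ℂ) * z ^ r) by ring,
    ← sum_range_one_sub_zpow_neg_mul_pow_pow hζ hk r, sum_mul]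
  exact sum_congr rfl fun s _ => by ring

theorem generating_function_two_forms_general (n : ℕ) (k : ℕ) (hk : 2 ≤ k) (z : ℂ) :
    1 / (∑ r ∈ Finset.range (n + 1), psi k r * (n.choose r : ℂ) * z ^ r) =
      (k : ℂ) / (∑ s ∈ Finset.Icc 1 (k - 1),
        (1 - (omega k) ^ (-(s : ℤ))) * (1 + (omega k) ^ s * z) ^ n) := by
  have hζ : IsPrimitiveRoot (omega k) k := Complex.isPrimitiveRoot_exp k (by omega)
  have hrange : range k = insert 0 (Icc 1 (k - 1)) := by
    ext s; simp only [mem_range, mem_insert, mem_Icc]; omega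
  have hsum : ∑ s ∈ Icc 1 (k - 1), (1 - (omega k) ^ (-(s : ℤ))) * (1 + (omega k) ^ s * z) ^ n
      = k * ∑ r ∈ range (n + 1), psi k r * (n.choose r : ℂ) * z ^ r := by
    rw [← sum_range_one_sub_zpow_neg_mul_one_add_pow hζ hk, hrange,
      sum_insert (by simp)]
    simp
  rw [hsum, div_mul_cancel_left₀ (by exact_mod_cast (by omega : k ≠ 0)), one_div]

theorem generating_function_two_forms (n : ℕ) (k : ℕ) (hk : 2 ≤ k) (z : ℂ)
    (h1 : ∑ r ∈ Finset.range (n + 1), psi k r * (n.choose r : ℂ) * z ^ r ≠ 0)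
    (h2 : ∑ s ∈ Finset.Icc 1 (k - 1),
        (1 - (omega k) ^ (-(s : ℤ))) * (1 + (omega k) ^ s * z) ^ n ≠ 0) :
    1 / (∑ r ∈ Finset.range (n + 1), psi k r * (n.choose r : ℂ) * z ^ r) =
      (k : ℂ) / (∑ s ∈ Finset.Icc 1 (k - 1),
        (1 - (omega k) ^ (-(s : ℤ))) * (1 + (omega k) ^ s * z) ^ n) :=
  generating_function_two_forms_general n k hk z
end

section
/- For n ∈ ℕ, k ≥ 2, and complex z with |z| < 1: Σ_{r=0}^{(k-1)n} ψ_{k,r} · B(n,k,r) · z^r = ((1 - z^k)^n / k) · Σ_{s=1}^{k} (1 - ω_k^{-s}) (1 - ω_k^s z)^{-n}. -/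
open Finset Polynomial

/-- `B(n,k,r)`: the coefficient of `x^r` in `(1 + x + ⋯ + x^{k-1})^n`. -/
noncomputable def genBinom (n k r : ℕ) : ℂ :=
  ((∑ i ∈ Finset.range k, (Polynomial.X : Polynomial ℂ) ^ i) ^ n).coeff r

/-! Since `ψ_{k,r} = [k ∣ r] - [k ∣ r - 1]` and a full geometric sum over the `k`-th roots of unity
detects divisibility by `k`, we have `k ψ_{k,r} = ∑_{s=1}^k (1 - ω^{-s}) ω^{sr}`. Substituting this and
exchanging the sums turns the left side into `k⁻¹ ∑_s (1 - ω^{-s}) P(ω^s z)`, where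
`P(w) = (1 + w + ⋯ + w^{k-1})^n = ((1 - w^k) / (1 - w))^n` is the generating polynomial of `B(n,k,·)`,
and `(ω^s z)^k = z^k`. -/

theorem Finset.sum_Icc_one_eq_sum_range_of_eq {M : Type*} [AddCancelCommMonoid M] {f : ℕ → M}
    {k : ℕ} (hf : f k = f 0) : ∑ s ∈ Icc 1 k, f s = ∑ s ∈ range k, f s := by
  have h := (sum_range_succ f k).symm.trans (sum_range_eq_add_Ico f k.succ_pos)
  rw [Ico_add_one_right_eq_Icc, hf, add_comm] at h
  exact (add_left_cancel h).symm

theorem geom_sum_pow_eq {K : Type*} [Field K] {x : K} (hx : x ≠ 1) (k n : ℕ) :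
    (∑ i ∈ range k, x ^ i) ^ n = (1 - x ^ k) ^ n * (1 - x) ^ (-(n : ℤ)) := by
  rw [geom_sum_eq hx, ← neg_div_neg_eq, neg_sub, neg_sub, div_pow, zpow_neg, zpow_natCast,
    div_eq_mul_inv]

theorem IsPrimitiveRoot.sum_Icc_zpow_pow {K : Type*} [Field K] {ζ : K} {k : ℕ}
    (hζ : IsPrimitiveRoot ζ k) (j : ℤ) :
    ∑ s ∈ Icc 1 k, (ζ ^ j) ^ s = if (k : ℤ) ∣ j then (k : K) else 0 := by
  have hu : (ζ ^ j) ^ k = 1 := by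
    rw [← zpow_natCast, ← zpow_mul, mul_comm, zpow_mul, zpow_natCast, hζ.pow_eq_one, one_zpow]
  rw [sum_Icc_one_eq_sum_range_of_eq (by rw [hu, pow_zero])]
  by_cases h : (k : ℤ) ∣ j
  · simp [h, (hζ.zpow_eq_one_iff_dvd j).mpr h]
  · rw [if_neg h, geom_sum_eq (mt (hζ.zpow_eq_one_iff_dvd j).mp h), hu, sub_self, zero_div]

theorem psi_eq_ite_dvd_sub_ite_dvd {k : ℕ} (hk : 2 ≤ k) (r : ℤ) :
    psi k r = (if (k : ℤ) ∣ r then 1 else 0) - (if (k : ℤ) ∣ r - 1 then 1 else 0) := by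
  have h1 : (1 : ℤ) % k = 1 := Int.emod_eq_of_lt zero_le_one (by omega)
  have hdvd : (k : ℤ) ∣ r - 1 ↔ r % k = 1 := by
    rw [← Int.modEq_iff_dvd, Int.ModEq, h1, eq_comm]
  simp only [Int.dvd_iff_emod_eq_zero, hdvd, psi]
  split_ifs <;> simp_all

theorem IsPrimitiveRoot.natCast_mul_psi {ζ : ℂ} {k : ℕ} (hζ : IsPrimitiveRoot ζ k) (hk : 2 ≤ k)
    (r : ℤ) : k * psi k r = ∑ s ∈ Icc 1 k, (1 - ζ ^ (-(s : ℤ))) * (ζ ^ s) ^ r := by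
  have hζ0 : ζ ≠ 0 := hζ.ne_zero (by omega)
  have hterm : ∀ s : ℕ, (1 - ζ ^ (-(s : ℤ))) * (ζ ^ s) ^ r = (ζ ^ r) ^ s - (ζ ^ (r - 1)) ^ s := by
    intro s
    simp only [sub_mul, one_mul, ← zpow_natCast, ← zpow_mul, ← zpow_add₀ hζ0]
    ring_nf
  simp only [hterm, sum_sub_distrib, hζ.sum_Icc_zpow_pow, psi_eq_ite_dvd_sub_ite_dvd hk, mul_sub,
    mul_ite, mul_one, mul_zero]

theorem sum_psi_mul_mul_pow {ζ : ℂ} {k : ℕ} (hζ : IsPrimitiveRoot ζ k) (hk : 2 ≤ k)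
    (a : ℕ → ℂ) (N : ℕ) (z : ℂ) :
    ∑ r ∈ range N, psi k r * a r * z ^ r =
      (k : ℂ)⁻¹ * ∑ s ∈ Icc 1 k, (1 - ζ ^ (-(s : ℤ))) * ∑ r ∈ range N, a r * (ζ ^ s * z) ^ r := by
  have hk0 : (k : ℂ) ≠ 0 := Nat.cast_ne_zero.mpr (by omega)
  have hpsi (r : ℕ) : psi k r = (k : ℂ)⁻¹ * ∑ s ∈ Icc 1 k, (1 - ζ ^ (-(s : ℤ))) * (ζ ^ s) ^ r := by
    have h := hζ.natCast_mul_psi hk r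
    simp only [zpow_natCast] at h
    rw [← h, inv_mul_cancel_left₀ hk0]
  simp only [hpsi, mul_sum, sum_mul]
  rw [sum_comm]
  refine sum_congr rfl fun s _ => sum_congr rfl fun r _ => ?_
  ring

theorem sum_genBinom_mul_pow (n k : ℕ) (w : ℂ) :
    ∑ r ∈ range ((k - 1) * n + 1), genBinom n k r * w ^ r = (∑ i ∈ range k, w ^ i) ^ n := by
  have hdeg : ((∑ i ∈ range k, (X : ℂ[X]) ^ i) ^ n).natDegree < (k - 1) * n + 1 := by
    refine Nat.lt_succ_of_le (natDegree_pow_le.trans ?_)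
    rw [mul_comm]
    gcongr
    refine natDegree_sum_le_of_forall_le _ _ fun i hi => ?_
    rw [natDegree_X_pow]
    exact Nat.le_sub_one_of_lt (mem_range.mp hi)
  simpa [genBinom] using (eval_eq_sum_range' hdeg w).symm

theorem psi_genBinom_identity (n k : ℕ) (hk : 2 ≤ k) (z : ℂ) (hz : ‖z‖ < 1) :
    ∑ r ∈ Finset.range ((k - 1) * n + 1), psi k r * genBinom n k r * z ^ r =
      ((1 - z ^ k) ^ n / (k : ℂ)) *
        ∑ s ∈ Finset.Icc 1 k,
          (1 - (omega k) ^ (-(s : ℤ))) * (1 - (omega k) ^ s * z) ^ (-(n : ℤ)) := by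
  have hω : IsPrimitiveRoot (omega k) k := Complex.isPrimitiveRoot_exp k (by omega)
  have hωz (s : ℕ) : (omega k ^ s * z) ^ k = z ^ k := by
    rw [mul_pow, ← pow_mul, mul_comm s, pow_mul, hω.pow_eq_one, one_pow, one_mul]
  have hωz_ne (s : ℕ) : omega k ^ s * z ≠ 1 := by
    intro h
    have h1 := congrArg norm h
    rw [norm_mul, norm_pow, Complex.norm_eq_one_of_pow_eq_one hω.pow_eq_one (by omega), one_pow,
      one_mul, norm_one] at h1
    exact hz.ne h1
  rw [sum_psi_mul_mul_pow hω hk, div_eq_inv_mul, mul_assoc]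
  congr 1
  rw [mul_sum]
  refine sum_congr rfl fun s _ => ?_
  rw [sum_genBinom_mul_pow, geom_sum_pow_eq (hωz_ne s), hωz]
  ring
end

section
/- Fix k ≥ 2. Define u_r(x) = (1/k) Σ_{s=1}^{k-1} (1 - ω_k^{rs}) e^{ω_k^s (1-x)} for r = 1, …, k-1. Then these functions satisfy the ODE system u_r'(x) = u_1(x) - u_{r+1}(x) for 1 ≤ r ≤ k-2, u_{k-1}'(x) = u_1(x), with boundary conditions u_r(1) = 1 for all r = 1, …, k-1. -/
/-!
Each exponential `e^{ω^s (1-x)}` is an eigenfunction of `d/dx` with eigenvalue `-ω^s`, and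
`-ω^s (1 - ω^{rs}) = (1 - ω^s) - (1 - ω^{(r+1)s})`; hence `u_r' = u_1 - u_{r+1}` for every `r`,
and the last equation is the case `r = k - 1`, because `u_k = 0` as `ω^k = 1`. At `x = 1` all
exponentials equal `1`, and `u_r(1) = 1` follows from `Σ_{s<k} ω^{rs} = 0` for `k ∤ r`.
-/

open Finset

/-- `u_r(x) = (1/k) Σ_{s=1}^{k-1} (1 - ω_k^{rs}) e^{ω_k^s (1-x)}`. -/
noncomputable def u (k r : ℕ) (x : ℝ) : ℂ :=
  (1 / (k : ℂ)) * ∑ s ∈ Finset.Icc 1 (k - 1),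
    (1 - (omega k) ^ (r * s)) * Complex.exp ((omega k) ^ s * (1 - (x : ℂ)))

theorem IsPrimitiveRoot.sum_pow_mul_eq_zero {R : Type*} [CommRing R] [IsDomain R] {ζ : R}
    {k r : ℕ} (hζ : IsPrimitiveRoot ζ k) (hr : ¬k ∣ r) : ∑ s ∈ range k, ζ ^ (r * s) = 0 := by
  have hne : ζ ^ r - 1 ≠ 0 := sub_ne_zero.mpr fun h => hr (hζ.dvd_of_pow_eq_one r h)
  have hgeom := geom_sum_mul (ζ ^ r) k
  rw [← pow_mul, mul_comm r k, pow_mul, hζ.pow_eq_one, one_pow, sub_self] at hgeom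
  simpa only [pow_mul] using (mul_eq_zero.mp hgeom).resolve_right hne

theorem omega_isPrimitiveRoot {k : ℕ} (hk : k ≠ 0) : IsPrimitiveRoot (omega k) k :=
  Complex.isPrimitiveRoot_exp k hk

theorem omega_pow_self (k : ℕ) : omega k ^ k = 1 := by
  rcases eq_or_ne k 0 with rfl | hk
  · exact pow_zero _
  · exact (omega_isPrimitiveRoot hk).pow_eq_one

theorem u_self (k : ℕ) (x : ℝ) : u k k x = 0 := by
  simp [u, pow_mul, omega_pow_self]

theorem hasDerivAt_cexp_mul_one_sub (c : ℂ) (x : ℝ) :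
    HasDerivAt (fun y : ℝ => Complex.exp (c * (1 - y))) (-c * Complex.exp (c * (1 - x))) x := by
  have hlin : HasDerivAt (fun z : ℂ => c * (1 - z)) (-c) x := by
    simpa using ((hasDerivAt_id (x : ℂ)).const_sub 1).const_mul c
  simpa only [mul_comm] using hlin.cexp.comp_ofReal

theorem u_hasDerivAt (k r : ℕ) (x : ℝ) :
    HasDerivAt (u k r) (u k 1 x - u k (r + 1) x) x := by
  have hsum := HasDerivAt.fun_sum (u := Icc 1 (k - 1)) fun s _ =>
    (hasDerivAt_cexp_mul_one_sub (omega k ^ s) x).const_mul (1 - omega k ^ (r * s))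
  refine (hsum.const_mul (1 / (k : ℂ))).congr_deriv ?_
  simp only [u, ← mul_sub, ← sum_sub_distrib]
  congr 1
  refine sum_congr rfl fun s _ => ?_
  rw [add_mul, one_mul, pow_add]
  ring

theorem u_apply_one {k r : ℕ} (hk : k ≠ 0) (hr : ¬k ∣ r) : u k r 1 = 1 := by
  have hsum : ∑ s ∈ Icc 1 (k - 1), (1 - omega k ^ (r * s)) = k := by
    have hsub : Icc 1 (k - 1) ⊆ range k := fun s hs => by
      simp only [mem_Icc, mem_range] at hs ⊢; omega
    have hzero : ∀ s ∈ range k, s ∉ Icc 1 (k - 1) → 1 - omega k ^ (r * s) = 0 := by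
      intro s hs hs'
      obtain rfl : s = 0 := by simp only [mem_Icc, mem_range] at hs hs'; omega
      simp
    rw [sum_subset hsub hzero, sum_sub_distrib, (omega_isPrimitiveRoot hk).sum_pow_mul_eq_zero hr]
    simp
  simp only [u, Complex.ofReal_one, sub_self, mul_zero, Complex.exp_zero, mul_one, hsum]
  field_simp

theorem u_solves_ode_system (k : ℕ) (hk : 2 ≤ k) :
    (∀ r, 1 ≤ r → r ≤ k - 2 → ∀ x : ℝ, HasDerivAt (u k r) (u k 1 x - u k (r + 1) x) x) ∧
      (∀ x : ℝ, HasDerivAt (u k (k - 1)) (u k 1 x) x) ∧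
      (∀ r, 1 ≤ r → r ≤ k - 1 → u k r 1 = 1) := by
  refine ⟨fun r _ _ x => u_hasDerivAt k r x, fun x => ?_, fun r hr hrk => ?_⟩
  · simpa [Nat.sub_add_cancel (by omega : 1 ≤ k), u_self] using u_hasDerivAt k (k - 1) x
  · exact u_apply_one (by omega) (Nat.not_dvd_of_pos_of_lt hr (by omega))
end
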